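/- Let B ⊆ A be a C-Galois extension with canonical entwining map ψ as above. Then A belongs to M_A^C(ψ), i.e. Δ_A(a a') = a_{(0)} ψ(a_{(1)} ⊗ a') for all a, a' ∈ A (where the right side uses the left A-action on A ⊗ C). -/
import Mathlib


open TensorProduct LinearMap Coalgebra
set_option linter.unusedSectionVars false

variable {k A C : Type*} [Field k] [Ring A] [Algebra k A]
  [AddCommGroup C] [Module k C] [Coalgebra k C]

/-- The four axioms of an entwining structure `(A, C, ψ)`. -/
def IsEntwining (ψ : C ⊗[k] A →ₗ[k] A ⊗[k] C) : Prop :=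
  (ψ ∘ₗ (LinearMap.mul' k A).lTensor C ∘ₗ (TensorProduct.assoc k C A A).toLinearMap
      = (LinearMap.mul' k A).rTensor C ∘ₗ (TensorProduct.assoc k A A C).symm.toLinearMap
        ∘ₗ ψ.lTensor A ∘ₗ (TensorProduct.assoc k A C A).toLinearMap ∘ₗ ψ.rTensor A)
  ∧ (∀ c : C, ψ (c ⊗ₜ[k] (1 : A)) = (1 : A) ⊗ₜ[k] c)
  ∧ ((comul (R := k) (A := C)).lTensor A ∘ₗ ψ
      = (TensorProduct.assoc k A C C).toLinearMap ∘ₗ ψ.rTensor C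
        ∘ₗ (TensorProduct.assoc k C A C).symm.toLinearMap ∘ₗ ψ.lTensor C
        ∘ₗ (TensorProduct.assoc k C C A).toLinearMap ∘ₗ (comul (R := k) (A := C)).rTensor A)
  ∧ ((TensorProduct.rid k A).toLinearMap ∘ₗ (counit (R := k) (A := C)).lTensor A ∘ₗ ψ
      = (TensorProduct.lid k A).toLinearMap ∘ₗ (counit (R := k) (A := C)).rTensor A)

/-- `ρ : A → A ⊗ C` is a (counital, coassociative) right `C`-comodule structure. -/
def IsComodule (ρ : A →ₗ[k] A ⊗[k] C) : Prop :=
  ((comul (R := k) (A := C)).lTensor A ∘ₗ ρ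
      = (TensorProduct.assoc k A C C).toLinearMap ∘ₗ ρ.rTensor C ∘ₗ ρ)
  ∧ ((TensorProduct.rid k A).toLinearMap
      ∘ₗ (counit (R := k) (A := C)).lTensor A ∘ₗ ρ = LinearMap.id)

/-- The coinvariants `B = A^{co C}` of a coaction `ρ`. -/
def coinvSet (ρ : A →ₗ[k] A ⊗[k] C) : Set A :=
  {b : A | ∀ a : A, ρ (b * a) = (LinearMap.mulLeft k b).rTensor C (ρ a)}

/-- The canonical map `A ⊗ A → A ⊗ C`, `a ⊗ a' ↦ a · ρ a'`, whose factorisation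
through `A ⊗_B A` is the canonical Galois map `can`. -/
noncomputable def canF (ρ : A →ₗ[k] A ⊗[k] C) : A ⊗[k] A →ₗ[k] A ⊗[k] C :=
  (LinearMap.mul' k A).rTensor C ∘ₗ (TensorProduct.assoc k A A C).symm.toLinearMap
    ∘ₗ ρ.lTensor A

/-- The kernel of `A ⊗ A ↠ A ⊗_B A`: the subspace spanned by
`a b ⊗ a' - a ⊗ b a'` for `b ∈ B = A^{co C}`. -/
noncomputable def relJ (ρ : A →ₗ[k] A ⊗[k] C) : Submodule k (A ⊗[k] A) :=
  Submodule.span k {x : A ⊗[k] A | ∃ (a a' b : A), b ∈ coinvSet ρ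
    ∧ x = (a * b) ⊗ₜ[k] a' - a ⊗ₜ[k] (b * a')}

/-- `B ⊆ A` is a `C`-Galois extension: the canonical map
`can : A ⊗_B A → A ⊗ C` is bijective; equivalently, `canF ρ` is surjective
with kernel exactly `relJ ρ`. -/
def IsCGalois (ρ : A →ₗ[k] A ⊗[k] C) : Prop :=
  Function.Surjective (canF ρ) ∧ LinearMap.ker (canF ρ) = relJ ρ

/-- A (linear) lift of the translation map `τ = can⁻¹(1 ⊗ -) : C → A ⊗_B A`
to `A ⊗ A`. -/
def IsTranslationLift (ρ : A →ₗ[k] A ⊗[k] C) (τ : C →ₗ[k] A ⊗[k] A) : Prop :=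
  ∀ c : C, canF ρ (τ c) = (1 : A) ⊗ₜ[k] c

/-- The canonical entwining map `ψ = can ∘ (A ⊗_B m) ∘ (τ ⊗ A)` associated to a
`C`-Galois extension, expressed through a lift `τ` of the translation map:
`ψ (c ⊗ a) = c⁽¹⁾ ((c⁽²⁾ a)₍₀₎) ⊗ (c⁽²⁾ a)₍₁₎`. -/
noncomputable def canPsi (ρ : A →ₗ[k] A ⊗[k] C) (τ : C →ₗ[k] A ⊗[k] A) :
    C ⊗[k] A →ₗ[k] A ⊗[k] C :=
  canF ρ ∘ₗ (LinearMap.mul' k A).lTensor A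
    ∘ₗ (TensorProduct.assoc k A A A).toLinearMap ∘ₗ τ.rTensor A

/-- The right `A`-action `(m ⊗ C) ∘ (A ⊗ ψ)` on `A ⊗ C` induced by an entwining map. -/
noncomputable def actPsi (ψ : C ⊗[k] A →ₗ[k] A ⊗[k] C) :
    (A ⊗[k] C) ⊗[k] A →ₗ[k] A ⊗[k] C :=
  (LinearMap.mul' k A).rTensor C ∘ₗ (TensorProduct.assoc k A A C).symm.toLinearMap
    ∘ₗ ψ.lTensor A ∘ₗ (TensorProduct.assoc k A C A).toLinearMap

section Aux

variable (ρ : A →ₗ[k] A ⊗[k] C) (τ : C →ₗ[k] A ⊗[k] A)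

lemma mulFirst {M : Type*} [AddCommGroup M] [Module k M] (x : A) (w : A ⊗[k] M) :
    (LinearMap.mul' k A).rTensor M ((TensorProduct.assoc k A A M).symm (x ⊗ₜ[k] w))
      = (LinearMap.mulLeft k x).rTensor M w := by
  induction w using TensorProduct.induction_on with
  | zero => simp only [tmul_zero, map_zero]
  | tmul y m => simp [LinearMap.mul'_apply]
  | add u v hu hv => simp only [tmul_add, map_add, hu, hv]

lemma mulSecond (w : A ⊗[k] A) (a' : A) :
    (LinearMap.mul' k A).lTensor A ((TensorProduct.assoc k A A A) (w ⊗ₜ[k] a'))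
      = (LinearMap.mulRight k a').lTensor A w := by
  induction w using TensorProduct.induction_on with
  | zero => rw [zero_tmul, LinearEquiv.map_zero, map_zero, map_zero]
  | tmul u v => simp [LinearMap.mul'_apply]
  | add u v hu hv => simp only [add_tmul, map_add, hu, hv]

lemma canF_tmul (u z : A) :
    canF ρ (u ⊗ₜ[k] z) = (LinearMap.mulLeft k u).rTensor C (ρ z) := by
  simp [canF, mulFirst]

lemma canF_mulLeft (x : A) (w : A ⊗[k] A) :
    canF ρ ((LinearMap.mulLeft k x).rTensor A w)
      = (LinearMap.mulLeft k x).rTensor C (canF ρ w) := by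
  induction w using TensorProduct.induction_on with
  | zero => simp
  | tmul u v =>
      simp only [rTensor_tmul, LinearMap.mulLeft_apply, canF_tmul]
      rw [LinearMap.mulLeft_mul, LinearMap.rTensor_comp, LinearMap.comp_apply]
  | add u v hu hv => simp [hu, hv]

/-- The map `x ⊗ c ↦ x c⁽¹⁾ ⊗ c⁽²⁾`. -/
noncomputable def Tmap : A ⊗[k] C →ₗ[k] A ⊗[k] A :=
  (LinearMap.mul' k A).rTensor A ∘ₗ (TensorProduct.assoc k A A A).symm.toLinearMap
    ∘ₗ τ.lTensor A

lemma Tmap_tmul (x : A) (c : C) :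
    Tmap τ (x ⊗ₜ[k] c) = (LinearMap.mulLeft k x).rTensor A (τ c) := by
  simp [Tmap, mulFirst]

lemma canF_Tmap (hτ : IsTranslationLift ρ τ) (z : A ⊗[k] C) :
    canF ρ (Tmap τ z) = z := by
  induction z using TensorProduct.induction_on with
  | zero => simp
  | tmul x c =>
      rw [Tmap_tmul, canF_mulLeft, hτ c]
      simp
  | add u v hu hv => simp [hu, hv]

lemma canPsi_tmul (c : C) (a' : A) :
    canPsi ρ τ (c ⊗ₜ[k] a') = canF ρ ((LinearMap.mulRight k a').lTensor A (τ c)) := by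
  simp [canPsi, mulSecond]

lemma actPsi_tmul (ψ : C ⊗[k] A →ₗ[k] A ⊗[k] C) (x : A) (c : C) (a' : A) :
    actPsi ψ ((x ⊗ₜ[k] c) ⊗ₜ[k] a')
      = (LinearMap.mulLeft k x).rTensor C (ψ (c ⊗ₜ[k] a')) := by
  simp [actPsi, mulFirst]

lemma relJ_stable (a' : A) {x : A ⊗[k] A} (hx : x ∈ relJ ρ) :
    (LinearMap.mulRight k a').lTensor A x ∈ relJ ρ := by
  induction hx using Submodule.span_induction with
  | mem y hy =>
      obtain ⟨a, a'', b, hb, rfl⟩ := hy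
      rw [map_sub]
      simp only [lTensor_tmul, LinearMap.mulRight_apply]
      exact Submodule.subset_span ⟨a, a'' * a', b, hb, by rw [mul_assoc]⟩
  | zero => simp
  | add u v _ _ hu hv => rw [map_add]; exact (relJ ρ).add_mem hu hv
  | smul r u _ hu => rw [map_smul]; exact (relJ ρ).smul_mem r hu

lemma key (hGal : IsCGalois ρ) (hτ : IsTranslationLift ρ τ) (a a' : A) :
    canF ρ ((LinearMap.mulRight k a').lTensor A (Tmap τ (ρ a))) = ρ (a * a') := by
  have hd : Tmap τ (ρ a) - (1 : A) ⊗ₜ[k] a ∈ relJ ρ := by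
    rw [← hGal.2, LinearMap.mem_ker, map_sub, canF_Tmap ρ τ hτ, canF_tmul]
    simp
  have h := relJ_stable ρ a' hd
  rw [← hGal.2] at h
  rw [map_sub] at h
  have hd' := LinearMap.mem_ker.mp h
  rw [map_sub, sub_eq_zero] at hd'
  rw [hd', lTensor_tmul, LinearMap.mulRight_apply, canF_tmul]
  simp

end Aux

/-- for a `C`-Galois extension `B ⊆ A` with canonical entwining map `ψ`,
`A ∈ M_A^C(ψ)`: `Δ_A (a a') = a₍₀₎ ψ(a₍₁₎ ⊗ a')` for all `a, a' ∈ A`. -/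
theorem A_in_entwined_modules (ρ : A →ₗ[k] A ⊗[k] C)
    (hρ : IsComodule ρ) (hGal : IsCGalois ρ)
    (τ : C →ₗ[k] A ⊗[k] A) (hτ : IsTranslationLift ρ τ) :
    ρ ∘ₗ LinearMap.mul' k A = actPsi (canPsi ρ τ) ∘ₗ ρ.rTensor A := by
  apply TensorProduct.ext'
  intro a a'
  simp only [LinearMap.comp_apply, rTensor_tmul, LinearMap.mul'_apply]
  rw [← key ρ τ hGal hτ a a']
  -- both sides are expressed via `ρ a`; induct on it
  induction ρ a using TensorProduct.induction_on with
  | zero => simp only [map_zero, zero_tmul]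
  | tmul x c =>
      rw [actPsi_tmul, canPsi_tmul, Tmap_tmul]
      rw [← canF_mulLeft]
      congr 1
      induction τ c using TensorProduct.induction_on with
      | zero => simp
      | tmul u v => simp [mul_assoc]
      | add u v hu hv => simp only [map_add, hu, hv]
  | add u v hu hv => simp only [map_add, add_tmul, hu, hv]
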